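/- arXiv:0812.4562 — 3 statements merged into one kernel-verified Lean document; each statement's English description precedes it below -/
import Mathlib

section
/- Let Γ be a (d−1)-dimensional shellable simplicial complex with h-vector (h_0, h_1, …, h_d), and let L = (τ_1, …, τ_r) be a shelling of Γ. Then for each i with 0 ≤ i ≤ d, h_i equals the number of facets τ_j such that |T_L(τ_j)| = i. -/
open Finset

/-- An (abstract) simplicial complex: a family of finite subsets closed under taking subsets. -/
def IsComplex {V : Type*} (K : Set (Finset V)) : Prop :=
  ∀ s ∈ K, ∀ t, t ⊆ s → t ∈ K

/-- Number of faces of cardinality `i` (that is, `f_{i-1}`). -/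
noncomputable def faceCount {V : Type*} (K : Set (Finset V)) (i : ℕ) : ℕ :=
  {s | s ∈ K ∧ s.card = i}.ncard

/-- `h` is the h-vector of the `(d-1)`-dimensional complex `K`:
`Σ_{i=0}^d h_i x^i = Σ_{i=0}^d f_{i-1} x^i (1-x)^{d-i}`. -/
def IsHVector {V : Type*} (K : Set (Finset V)) (d : ℕ) (h : ℕ → ℤ) : Prop :=
  ∑ i ∈ Finset.range (d + 1), Polynomial.C (h i) * Polynomial.X ^ i =
    ∑ i ∈ Finset.range (d + 1),
      Polynomial.C ((faceCount K i : ℤ)) * Polynomial.X ^ i * (1 - Polynomial.X) ^ (d - i)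

/-- `K` is pure of dimension `d - 1`: nonempty in top dimension, and every face is
contained in a face of cardinality `d`. -/
def IsPureDim {V : Type*} (K : Set (Finset V)) (d : ℕ) : Prop :=
  (∃ s ∈ K, s.card = d) ∧ ∀ s ∈ K, ∃ t ∈ K, s ⊆ t ∧ t.card = d

/-- The facets listed before `τ` in the ordering `L`. -/
def prevFacets {V : Type*} [DecidableEq V] (L : List (Finset V)) (τ : Finset V) :
    List (Finset V) :=
  L.takeWhile (fun τ' => τ' != τ)

/-- `γ` lies in `∪_{j<i} τ̄_j`, the union of the closures of the facets listed before `τ`. -/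
def coveredBefore {V : Type*} [DecidableEq V] (L : List (Finset V)) (τ γ : Finset V) : Prop :=
  ∃ τ' ∈ prevFacets L τ, γ ⊆ τ'

/-- `T_L(τ)`: the set of facets of `τ̄ ∩ (∪_{j<i} τ̄_j)`. -/
def TL {V : Type*} [DecidableEq V] (L : List (Finset V)) (τ : Finset V) : Set (Finset V) :=
  {γ | γ ⊆ τ ∧ coveredBefore L τ γ ∧
    ∀ γ', γ ⊆ γ' → γ' ⊆ τ → coveredBefore L τ γ' → γ' = γ}

/-- `L` is a shelling of the pure `(d-1)`-dimensional complex `K`: it lists the facets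
(faces of cardinality `d`) without repetition, every face of `K` lies under some facet,
and for every non-initial facet `τ` the complex `τ̄ ∩ (∪_{j<i} τ̄_j)` is pure of
dimension `d - 2`. -/
def IsShelling {V : Type*} [DecidableEq V] (K : Set (Finset V)) (d : ℕ)
    (L : List (Finset V)) : Prop :=
  L.Nodup ∧
  (∀ τ, τ ∈ L ↔ τ ∈ K ∧ τ.card = d) ∧
  (∀ s ∈ K, ∃ t ∈ L, s ⊆ t) ∧
  (∀ τ ∈ L, prevFacets L τ ≠ [] →
    IsPureDim {γ | γ ⊆ τ ∧ coveredBefore L τ γ} (d - 1))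

/-- Monomials in `k` variables `x_0 < x_1 < … < x_{k-1}`, recorded by exponent vectors. -/
abbrev Mono (k : ℕ) := Fin k → ℕ

/-- Total degree of a monomial. -/
def mDeg {k : ℕ} (μ : Mono k) : ℕ := ∑ i, μ i

/-- Divisibility of monomials. -/
def mDvd {k : ℕ} (ν μ : Mono k) : Prop := ∀ i, ν i ≤ μ i

/-- `S(a_1, …, a_k)`: monomials whose exponent of `x_i` is at most `a_i ∈ ℕ ∪ {∞}`. -/
def SBound {k : ℕ} (b : Fin k → ℕ∞) : Set (Mono k) :=
  {μ | ∀ i, (μ i : ℕ∞) ≤ b i}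

/-- A multicomplex in `S(b)`: a nonempty set of monomials of `S(b)` closed under divisibility. -/
def IsMulticomplex {k : ℕ} (b : Fin k → ℕ∞) (M : Set (Mono k)) : Prop :=
  M.Nonempty ∧ M ⊆ SBound b ∧ ∀ μ ∈ M, ∀ ν, mDvd ν μ → ν ∈ M

/-- `F_i(M)`: the number of monomials of `M` of total degree `i`. -/
noncomputable def FVec {k : ℕ} (M : Set (Mono k)) (i : ℕ) : ℕ :=
  {μ ∈ M | mDeg μ = i}.ncard

/-- Reverse lexicographic order (within a fixed total degree): `μ < ν` if for some `i`
the exponent of `x_i` in `μ` is smaller and the exponents agree beyond `i`. -/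
def mRlexLt {k : ℕ} (μ ν : Mono k) : Prop :=
  ∃ i, μ i < ν i ∧ ∀ j, i < j → μ j = ν j

/-- The bound vector `(∞^{n-d-m}, p_1 - 1, …, p_m - 1)` on `n - d` variables. -/
def lamBounds (n d m : ℕ) (p : Fin m → ℕ) : Fin (n - d) → ℕ∞ :=
  fun j =>
    if (j : ℕ) < n - d - m then ⊤
    else if h2 : (j : ℕ) - (n - d - m) < m then (((p ⟨(j : ℕ) - (n - d - m), h2⟩ - 1 : ℕ)) : ℕ∞)
    else 0

/-- The vertex set of `Λ(l; p_1, …, p_m)`: a set `V'` of size `l` together with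
disjoint sets `P_i` of sizes `p_i`. -/
abbrev LamVert (l : ℕ) {m : ℕ} (p : Fin m → ℕ) := Fin l ⊕ Σ i : Fin m, Fin (p i)

/-- The vertex block `P_i`. -/
def Pblock (l : ℕ) {m : ℕ} (p : Fin m → ℕ) (i : Fin m) : Finset (LamVert l p) :=
  Finset.univ.image (fun j : Fin (p i) => (Sum.inr ⟨i, j⟩ : LamVert l p))

/-- The faces of `Λ(l; p_1, …, p_m)`: subsets of the vertex set containing no `P_i` entirely. -/
def LambdaFaces (l : ℕ) {m : ℕ} (p : Fin m → ℕ) : Set (Finset (LamVert l p)) :=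
  {F | ∀ i : Fin m, ¬ Pblock l p i ⊆ F}

/-- `full(τ) = {i : |P_i ∩ τ| = |P_i| - 1}`. -/
def fullSet {l m : ℕ} {p : Fin m → ℕ} (τ : Finset (LamVert l p)) : Finset (Fin m) :=
  Finset.univ.filter (fun i => (Pblock l p i ∩ τ).card = p i - 1)

/-- The elements of `P_i` missing from `τ`; a singleton `{miss(τ, i)}` when `i ∈ full(τ)`. -/
def missSet {l m : ℕ} {p : Fin m → ℕ} (τ : Finset (LamVert l p)) (i : Fin m) :
    Finset (LamVert l p) :=
  Pblock l p i \ τ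

/-- Candidates for `s_O(τ)`: vertices not in `τ` and different from each `miss(τ, i)`,
`i ∈ full(τ)`. -/
def sCand {l m : ℕ} {p : Fin m → ℕ} (τ : Finset (LamVert l p)) : Finset (LamVert l p) :=
  Finset.univ.filter (fun v => v ∉ τ ∧ ∀ i ∈ fullSet τ, v ∉ missSet τ i)

/-- The position (with respect to the ordering `e`) of `s_O(τ)`, or `∞` if it does not exist. -/
noncomputable def sPos {l m n : ℕ} {p : Fin m → ℕ} (e : LamVert l p ≃ Fin n)
    (τ : Finset (LamVert l p)) : WithTop (Fin n) :=
  ((sCand τ).image e).min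

/-- `τ_{> s_O(τ)}`. -/
noncomputable def tauAbove {l m n : ℕ} {p : Fin m → ℕ} (e : LamVert l p ≃ Fin n)
    (τ : Finset (LamVert l p)) : Finset (LamVert l p) :=
  τ.filter (fun y => sPos e τ < ((e y : Fin n) : WithTop (Fin n)))

/-- `U_O(τ) = { y ∈ P_i : y > miss(τ, i) for some i ∈ full(τ) }`. -/
def USet {l m n : ℕ} {p : Fin m → ℕ} (e : LamVert l p ≃ Fin n)
    (τ : Finset (LamVert l p)) : Finset (LamVert l p) :=
  Finset.univ.filter
    (fun y => ∃ i ∈ fullSet τ, y ∈ Pblock l p i ∧ ∃ w ∈ missSet τ i, e w < e y)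

/-- `R_O(τ) = τ_{> s_O(τ)} ∪ U_O(τ)`. -/
noncomputable def RSet {l m n : ℕ} {p : Fin m → ℕ} (e : LamVert l p ≃ Fin n)
    (τ : Finset (LamVert l p)) : Finset (LamVert l p) :=
  tauAbove e τ ∪ USet e τ

/-- Reverse lexicographic comparison of two finite vertex sets with respect to the
ordering `e`: `τ < τ'` if the largest vertex in which they differ belongs to `τ'`. -/
def rlexLt {l m n : ℕ} {p : Fin m → ℕ} (e : LamVert l p ≃ Fin n)
    (τ τ' : Finset (LamVert l p)) : Prop :=
  ∃ v, v ∈ τ' ∧ v ∉ τ ∧ ∀ w, e v < e w → (w ∈ τ ↔ w ∈ τ')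

/-- The `d`-skeleton of `Λ`: faces of cardinality at most `d`. -/
def skel (l : ℕ) {m : ℕ} (p : Fin m → ℕ) (d : ℕ) : Set (Finset (LamVert l p)) :=
  {F | F ∈ LambdaFaces l p ∧ F.card ≤ d}

/-- The facets of the `d`-skeleton of `Λ`: faces of cardinality exactly `d`. -/
def skelFacets (l : ℕ) {m : ℕ} (p : Fin m → ℕ) (d : ℕ) : Set (Finset (LamVert l p)) :=
  {F | F ∈ LambdaFaces l p ∧ F.card = d}

/-- `S^d`: the monomials of `S(b)` of total degree at most `d`. -/
def SBoundDeg {k : ℕ} (b : Fin k → ℕ∞) (d : ℕ) : Set (Mono k) :=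
  {μ | μ ∈ SBound b ∧ mDeg μ ≤ d}

/-! Every face `γ` of `Γ` lies in a unique interval `[R(τ), τ]`, where `τ` is the first facet
containing `γ` and the restriction face `R(τ)` consists of the vertices `v ∈ τ` with `τ \ {v}`
already covered by earlier facets: purity of `τ̄ ∩ (∪_{j<i} τ̄_j)` says that a face of `τ` is
covered exactly when it misses some vertex of `R(τ)`. The facets of that intersection are the
`τ \ {v}`, `v ∈ R(τ)`, so `|T_L(τ)| = |R(τ)|`, and the binomial theorem gives
`Σ_{R(τ) ⊆ γ ⊆ τ} x^|γ| (1-x)^(d-|γ|) = x^|R(τ)|`. Summing over the facets turns the defining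
identity of the h-vector into `Σ h_i x^i = Σ_τ x^|R(τ)|`. -/

section General

theorem Finset.sum_Icc_pow_mul_pow {α R : Type*} [DecidableEq α] [CommSemiring R]
    (a b : R) {s t : Finset α} (hst : s ⊆ t) :
    ∑ u ∈ Icc s t, a ^ #u * b ^ (#t - #u) = a ^ #s * (a + b) ^ #(t \ s) := by
  rw [Icc_eq_image_powerset hst, sum_image (fun u hu v hv huv => ?_),
    ← sum_pow_mul_eq_add_pow, mul_sum]
  · refine sum_congr rfl fun u hu => ?_
    have hu : u ⊆ t \ s := mem_powerset.1 hu
    have hdisj : Disjoint s u := disjoint_of_subset_right hu disjoint_sdiff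
    have hcard : #t = #s + #(t \ s) := by rw [add_comm, card_sdiff_add_card_eq_card hst]
    have hle : #u ≤ #(t \ s) := card_le_card hu
    rw [card_union_of_disjoint hdisj, pow_add, mul_assoc, hcard, show
      #s + #(t \ s) - (#s + #u) = #(t \ s) - #u by omega]
  · have hdisj : ∀ w ∈ (t \ s).powerset, Disjoint s w := fun w hw =>
      disjoint_of_subset_right (mem_powerset.1 hw) disjoint_sdiff
    rw [← union_sdiff_cancel_left (hdisj u hu), ← union_sdiff_cancel_left (hdisj v hv)]
    exact congrArg (· \ s) huv

theorem Finset.sum_comp_eq_sum_range_card_filter {ι M : Type*} [AddCommMonoid M]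
    (s : Finset ι) (f : ι → ℕ) (g : ℕ → M) {n : ℕ} (hf : ∀ x ∈ s, f x < n) :
    ∑ x ∈ s, g (f x) = ∑ j ∈ range n, #{x ∈ s | f x = j} • g j := by
  rw [← sum_fiberwise_of_maps_to (t := range n) (fun x hx => mem_range.2 (hf x hx))]
  refine sum_congr rfl fun j _ => ?_
  rw [sum_congr rfl fun x hx => by rw [(mem_filter.1 hx).2], sum_const]

open Polynomial in
theorem Polynomial.coeff_sum_range_C_mul_X_pow {R : Type*} [Semiring R] (a : ℕ → R)
    {n i : ℕ} (hi : i < n) :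
    (∑ j ∈ range n, C (a j) * X ^ j).coeff i = a i := by
  simp only [finsetSum_coeff, coeff_C_mul_X_pow, sum_ite_eq, mem_range, hi, if_true]

end General

section Ordering

variable {V : Type*} [DecidableEq V] {L : List (Finset V)} {τ τ' γ : Finset V}

theorem prevFacets_cons_self (L : List (Finset V)) (τ : Finset V) :
    prevFacets (τ :: L) τ = [] := by
  simp [prevFacets]

theorem prevFacets_cons_of_ne {c : Finset V} (h : c ≠ τ) :
    prevFacets (c :: L) τ = c :: prevFacets L τ := by
  simp [prevFacets, h]

theorem mem_of_mem_prevFacets (h : τ' ∈ prevFacets L τ) : τ' ∈ L :=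
  (List.takeWhile_prefix _).subset h

theorem ne_of_mem_prevFacets (h : τ' ∈ prevFacets L τ) : τ' ≠ τ := by
  simpa using List.mem_takeWhile_imp h

theorem coveredBefore.mono (h : coveredBefore L τ γ) {γ' : Finset V} (hγ' : γ' ⊆ γ) :
    coveredBefore L τ γ' :=
  let ⟨t, ht, hγt⟩ := h; ⟨t, ht, hγ'.trans hγt⟩

theorem mem_prevFacets_or_mem_prevFacets (hL : L.Nodup) (hτ : τ ∈ L) (hτ' : τ' ∈ L)
    (hne : τ ≠ τ') : τ ∈ prevFacets L τ' ∨ τ' ∈ prevFacets L τ := by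
  induction L with
  | nil => cases hτ
  | cons c L ih =>
    obtain ⟨hc, hL⟩ := List.nodup_cons.1 hL
    rcases List.mem_cons.1 hτ with rfl | hτ
    · simp [prevFacets_cons_of_ne hne]
    rcases List.mem_cons.1 hτ' with rfl | hτ'
    · simp [prevFacets_cons_of_ne hne.symm]
    rw [prevFacets_cons_of_ne (ne_of_mem_of_not_mem hτ' hc).symm,
      prevFacets_cons_of_ne (ne_of_mem_of_not_mem hτ hc).symm]
    exact (ih hL hτ hτ').imp (List.mem_cons_of_mem _) (List.mem_cons_of_mem _)

theorem exists_mem_not_coveredBefore (h : ∃ t ∈ L, γ ⊆ t) :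
    ∃ τ ∈ L, γ ⊆ τ ∧ ¬ coveredBefore L τ γ := by
  induction L with
  | nil => simp at h
  | cons c L ih =>
    by_cases hc : γ ⊆ c
    · refine ⟨c, List.mem_cons_self, hc, ?_⟩
      rintro ⟨t, ht, -⟩
      simp [prevFacets_cons_self] at ht
    obtain ⟨t, ht, hγt⟩ := h
    have ht : t ∈ L := (List.mem_cons.1 ht).resolve_left (by rintro rfl; exact hc hγt)
    obtain ⟨τ, hτ, hγτ, hnc⟩ := ih ⟨t, ht, hγt⟩
    refine ⟨τ, List.mem_cons_of_mem _ hτ, hγτ, fun ⟨t', ht', hγt'⟩ => ?_⟩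
    rw [prevFacets_cons_of_ne (by rintro rfl; exact hc hγτ)] at ht'
    rcases List.mem_cons.1 ht' with rfl | ht'
    · exact hc hγt'
    · exact hnc ⟨t', ht', hγt'⟩

end Ordering

section Shelling

variable {V : Type*} [DecidableEq V] {K : Set (Finset V)} {d : ℕ} {L : List (Finset V)}
  {τ γ : Finset V}

open Classical in
noncomputable def restrictionFace (L : List (Finset V)) (τ : Finset V) : Finset V :=
  {v ∈ τ | coveredBefore L τ (τ.erase v)}

open Classical in
theorem mem_restrictionFace {v : V} :
    v ∈ restrictionFace L τ ↔ v ∈ τ ∧ coveredBefore L τ (τ.erase v) :=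
  mem_filter

theorem restrictionFace_subset (L : List (Finset V)) (τ : Finset V) :
    restrictionFace L τ ⊆ τ :=
  fun _ hv => (mem_restrictionFace.1 hv).1

theorem IsShelling.card_eq (hL : IsShelling K d L) (hτ : τ ∈ L) : #τ = d :=
  ((hL.2.1 τ).1 hτ).2

theorem card_restrictionFace_le (hL : IsShelling K d L) (hτ : τ ∈ L) :
    #(restrictionFace L τ) ≤ d :=
  hL.card_eq hτ ▸ card_le_card (restrictionFace_subset L τ)

theorem coveredBefore_erase_of_mem_restrictionFace {v : V} (hv : v ∈ restrictionFace L τ) :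
    coveredBefore L τ (τ.erase v) :=
  (mem_restrictionFace.1 hv).2

theorem exists_erase_coveredBefore (hL : IsShelling K d L) (hτ : τ ∈ L) (hγτ : γ ⊆ τ)
    (hγ : coveredBefore L τ γ) : ∃ v ∈ τ, v ∉ γ ∧ coveredBefore L τ (τ.erase v) := by
  obtain ⟨τ', hτ'p, hγτ'⟩ := hγ
  obtain ⟨t, ⟨htτ, htcov⟩, hγt, htcard⟩ :=
    (hL.2.2.2 τ hτ (List.ne_nil_of_mem hτ'p)).2 γ ⟨hγτ, τ', hτ'p, hγτ'⟩
  have hτd : #τ = d := hL.card_eq hτ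
  have hd : d ≠ 0 := by
    rintro rfl
    have hτ'd : #τ' = 0 := hL.card_eq (mem_of_mem_prevFacets hτ'p)
    exact ne_of_mem_prevFacets hτ'p <| by rw [card_eq_zero.1 hτ'd, card_eq_zero.1 hτd]
  obtain ⟨v, hvτ, hvt⟩ := exists_of_ssubset (ssubset_of_subset_of_ne htτ (by
    rintro rfl; omega))
  have hte : t = τ.erase v :=
    eq_of_subset_of_card_le (subset_erase.2 ⟨htτ, hvt⟩) (by rw [card_erase_of_mem hvτ]; omega)
  exact ⟨v, hvτ, fun hvγ => hvt (hγt hvγ), hte ▸ htcov⟩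

theorem coveredBefore_iff_exists_mem_restrictionFace (hL : IsShelling K d L) (hτ : τ ∈ L)
    (hγτ : γ ⊆ τ) : coveredBefore L τ γ ↔ ∃ v ∈ restrictionFace L τ, v ∉ γ := by
  constructor
  · intro hγ
    obtain ⟨v, hvτ, hvγ, hcov⟩ := exists_erase_coveredBefore hL hτ hγτ hγ
    exact ⟨v, mem_restrictionFace.2 ⟨hvτ, hcov⟩, hvγ⟩
  · rintro ⟨v, hv, hvγ⟩
    exact (coveredBefore_erase_of_mem_restrictionFace hv).mono (subset_erase.2 ⟨hγτ, hvγ⟩)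

theorem not_coveredBefore_iff_restrictionFace_subset (hL : IsShelling K d L) (hτ : τ ∈ L)
    (hγτ : γ ⊆ τ) : ¬ coveredBefore L τ γ ↔ restrictionFace L τ ⊆ γ := by
  rw [coveredBefore_iff_exists_mem_restrictionFace hL hτ hγτ]
  push Not
  rfl

theorem TL_eq_image_erase (hL : IsShelling K d L) (hτ : τ ∈ L) :
    TL L τ = ((restrictionFace L τ).image τ.erase : Set (Finset V)) := by
  ext γ
  simp only [TL, Set.mem_ofPred_eq, coe_image, Set.mem_image, mem_coe]
  constructor
  · rintro ⟨hγτ, hγ, hmax⟩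
    obtain ⟨v, hv, hvγ⟩ := (coveredBefore_iff_exists_mem_restrictionFace hL hτ hγτ).1 hγ
    exact ⟨v, hv, hmax _ (subset_erase.2 ⟨hγτ, hvγ⟩) (erase_subset _ _)
      (coveredBefore_erase_of_mem_restrictionFace hv)⟩
  · rintro ⟨v, hv, rfl⟩
    refine ⟨erase_subset _ _, coveredBefore_erase_of_mem_restrictionFace hv,
      fun γ' hvγ' hγ'τ hγ' => ?_⟩
    obtain ⟨w, hw, hwγ'⟩ := (coveredBefore_iff_exists_mem_restrictionFace hL hτ hγ'τ).1 hγ'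
    obtain rfl : w = v := by
      by_contra hwv
      exact hwγ' (hvγ' (mem_erase.2 ⟨hwv, restrictionFace_subset L τ hw⟩))
    exact (subset_erase.2 ⟨hγ'τ, hwγ'⟩).antisymm hvγ'

theorem ncard_TL (hL : IsShelling K d L) (hτ : τ ∈ L) :
    (TL L τ).ncard = #(restrictionFace L τ) := by
  rw [TL_eq_image_erase hL hτ, Set.ncard_coe_finset, card_image_of_injOn]
  exact fun v hv w hw hvw => (erase_inj τ (restrictionFace_subset L τ hv)).1 hvw

theorem mem_Icc_restrictionFace_iff (hL : IsShelling K d L) (hτ : τ ∈ L) :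
    γ ∈ Icc (restrictionFace L τ) τ ↔ γ ⊆ τ ∧ ¬ coveredBefore L τ γ := by
  rw [mem_Icc, and_comm]
  exact and_congr_right fun hγτ =>
    (not_coveredBefore_iff_restrictionFace_subset hL hτ hγτ).symm

theorem pairwiseDisjoint_Icc_restrictionFace (hL : IsShelling K d L) :
    (L.toFinset : Set (Finset V)).PairwiseDisjoint fun τ => Icc (restrictionFace L τ) τ := by
  intro τ hτ τ' hτ' hne
  simp only [mem_coe, List.mem_toFinset] at hτ hτ'
  refine disjoint_left.2 fun γ hγ hγ' => ?_
  rw [mem_Icc_restrictionFace_iff hL hτ] at hγ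
  rw [mem_Icc_restrictionFace_iff hL hτ'] at hγ'
  rcases mem_prevFacets_or_mem_prevFacets hL.1 hτ hτ' hne with h | h
  · exact hγ'.2 ⟨τ, h, hγ.1⟩
  · exact hγ.2 ⟨τ', h, hγ'.1⟩

theorem eq_biUnion_Icc_restrictionFace (hK : IsComplex K) (hL : IsShelling K d L) :
    K = ↑(L.toFinset.biUnion fun τ => Icc (restrictionFace L τ) τ) := by
  ext γ
  simp only [coe_biUnion, mem_coe, List.mem_toFinset, Set.mem_iUnion, exists_prop]
  constructor
  · intro hγ
    obtain ⟨τ, hτ, hγτ, hγ⟩ := exists_mem_not_coveredBefore (hL.2.2.1 γ hγ)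
    exact ⟨τ, hτ, (mem_Icc_restrictionFace_iff hL hτ).2 ⟨hγτ, hγ⟩⟩
  · rintro ⟨τ, hτ, hγ⟩
    exact hK τ ((hL.2.1 τ).1 hτ).1 γ (mem_Icc.1 hγ).2

open Polynomial in
theorem sum_faceCount_eq_sum_X_pow_restrictionFace (hK : IsComplex K)
    (hL : IsShelling K d L) :
    ∑ i ∈ range (d + 1), C (faceCount K i : ℤ) * X ^ i * (1 - X) ^ (d - i) =
      ∑ τ ∈ L.toFinset, (X : ℤ[X]) ^ #(restrictionFace L τ) := by
  set F := L.toFinset.biUnion fun τ => Icc (restrictionFace L τ) τ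
  have hFd : ∀ γ ∈ F, #γ < d + 1 := fun γ hγ => by
    obtain ⟨τ, hτ, hγ⟩ := mem_biUnion.1 hγ
    exact Nat.lt_succ_of_le (hL.card_eq (List.mem_toFinset.1 hτ) ▸ card_le_card (mem_Icc.1 hγ).2)
  have hfaceCount : ∀ i, faceCount K i = #{γ ∈ F | #γ = i} := fun i => by
    rw [faceCount, eq_biUnion_Icc_restrictionFace hK hL, ← Set.ncard_coe_finset, coe_filter]
    rfl
  calc ∑ i ∈ range (d + 1), C (faceCount K i : ℤ) * X ^ i * (1 - X) ^ (d - i)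
      = ∑ i ∈ range (d + 1), #{γ ∈ F | #γ = i} • ((X : ℤ[X]) ^ i * (1 - X) ^ (d - i)) := by
        simp only [hfaceCount, map_natCast, nsmul_eq_mul, mul_assoc]
    _ = ∑ γ ∈ F, (X : ℤ[X]) ^ #γ * (1 - X) ^ (d - #γ) :=
        (sum_comp_eq_sum_range_card_filter F card (fun i => X ^ i * (1 - X) ^ (d - i)) hFd).symm
    _ = ∑ τ ∈ L.toFinset, ∑ γ ∈ Icc (restrictionFace L τ) τ,
          (X : ℤ[X]) ^ #γ * (1 - X) ^ (d - #γ) :=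
        sum_biUnion (pairwiseDisjoint_Icc_restrictionFace hL)
    _ = ∑ τ ∈ L.toFinset, (X : ℤ[X]) ^ #(restrictionFace L τ) := sum_congr rfl fun τ hτ => by
        rw [← hL.card_eq (List.mem_toFinset.1 hτ),
          sum_Icc_pow_mul_pow _ _ (restrictionFace_subset L τ), add_sub_cancel, one_pow, mul_one]

end Shelling

open Polynomial in
/-- If `L` is a shelling of the `(d-1)`-dimensional complex `Γ` with
h-vector `h`, then `h_i` is the number of facets `τ` with `|T_L(τ)| = i`. -/
theorem hvector_eq_shelling_count {V : Type*} [DecidableEq V] (K : Set (Finset V)) (d : ℕ)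
    (L : List (Finset V)) (h : ℕ → ℤ)
    (hK : IsComplex K) (hL : IsShelling K d L) (hh : IsHVector K d h) :
    ∀ i ≤ d, h i = ({τ | τ ∈ L ∧ (TL L τ).ncard = i}.ncard : ℤ) := by
  intro i hi
  have hRd : ∀ τ ∈ L.toFinset, #(restrictionFace L τ) < d + 1 := fun τ hτ =>
    Nat.lt_succ_of_le (card_restrictionFace_le hL (List.mem_toFinset.1 hτ))
  have hpoly : ∑ j ∈ range (d + 1), C (h j) * X ^ j =
      ∑ j ∈ range (d + 1), C (#{τ ∈ L.toFinset | #(restrictionFace L τ) = j} : ℤ) * X ^ j := by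
    rw [hh, sum_faceCount_eq_sum_X_pow_restrictionFace hK hL,
      sum_comp_eq_sum_range_card_filter _ _ (fun j => (X : ℤ[X]) ^ j) hRd]
    simp only [map_natCast, nsmul_eq_mul]
  have hcount : {τ | τ ∈ L ∧ (TL L τ).ncard = i} =
      ↑({τ ∈ L.toFinset | #(restrictionFace L τ) = i}) := by
    ext τ
    simp only [Set.mem_ofPred_eq, coe_filter, List.mem_toFinset]
    exact and_congr_right fun hτ => by rw [ncard_TL hL hτ]
  have hi' : i < d + 1 := Nat.lt_succ_of_le hi
  rw [hcount, Set.ncard_coe_finset, ← coeff_sum_range_C_mul_X_pow h hi', hpoly,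
    coeff_sum_range_C_mul_X_pow _ hi']
end

section
/- Let Γ be a simplicial complex on a finite vertex set of size n, and let a group G act on the vertices of Γ so that the image of every face is a face, with the action proper: whenever F is a face of Γ and gF = F for some g ∈ G, then gv = v for every vertex v ∈ F. Let m be the number of G-orbits on the vertex set of size greater than 1. Then every face of Γ has at most n − m vertices; that is, the dimension of Γ is at most n − m − 1. -/
open Finset

/-!
If a face `F` contained a whole orbit `O`, then `O` would itself be a face mapped onto itself by
every group element, so properness forces every `g` to fix `O` pointwise and `O` is a single
point. Hence every orbit of size at least two meets the complement of `F`, and since orbits are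
images of points, there are at most `n - |F|` such orbits.
-/

section ProperAction

variable {V : Type*} {G : Type*} [Group G] [MulAction G V]

theorem orbit_eq_singleton_of_subset_face [DecidableEq V] {Γ : Set (Finset V)}
    (hΓ : IsComplex Γ)
    (hproper : ∀ g : G, ∀ F ∈ Γ, F.image (fun v => g • v) = F → ∀ v ∈ F, g • v = v)
    {F : Finset V} (hF : F ∈ Γ) {v : V} (hsub : MulAction.orbit G v ⊆ ↑F) :
    MulAction.orbit G v = {v} := by
  classical
  set O := F.filter (· ∈ MulAction.orbit G v)
  have hO_coe : (O : Set V) = MulAction.orbit G v := by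
    rw [Finset.coe_filter]
    exact Set.sep_eq_of_subset hsub
  have hO_face : O ∈ Γ := hΓ F hF O (Finset.filter_subset _ _)
  have hO_invariant (g : G) : O.image (fun w => g • w) = O := by
    rw [← Finset.coe_inj, Finset.coe_image, hO_coe]
    exact MulAction.smul_orbit g v
  have hv : v ∈ O := by
    rw [← Finset.mem_coe, hO_coe]
    exact MulAction.mem_orbit_self v
  refine Set.eq_singleton_iff_unique_mem.mpr ⟨MulAction.mem_orbit_self v, ?_⟩
  rintro _ ⟨g, rfl⟩
  exact hproper g O hO_face (hO_invariant g) v hv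

theorem ncard_orbits_not_subset_le [Fintype V] (F : Finset V) :
    {W : Set V | (∃ v : V, W = MulAction.orbit G v) ∧ ¬ W ⊆ ↑F}.ncard ≤
      Fintype.card V - F.card := by
  have hsub : {W : Set V | (∃ v : V, W = MulAction.orbit G v) ∧ ¬ W ⊆ ↑F} ⊆
      (MulAction.orbit G ·) '' (↑F)ᶜ := by
    rintro _ ⟨⟨v, rfl⟩, hW⟩
    obtain ⟨x, hx, hxF⟩ := Set.not_subset.mp hW
    exact ⟨x, hxF, MulAction.orbit_eq_iff.mpr hx⟩
  calc _ ≤ ((MulAction.orbit G ·) '' (↑F : Set V)ᶜ).ncard := Set.ncard_le_ncard hsub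
    _ ≤ (↑F : Set V)ᶜ.ncard := Set.ncard_image_le
    _ = Fintype.card V - F.card := by
      rw [Set.ncard_compl, Set.ncard_coe_finset, Nat.card_eq_fintype_card]

end ProperAction

theorem proper_action_dimension_bound_general {V : Type*} [Fintype V] [DecidableEq V]
    {G : Type*} [Group G] [MulAction G V]
    (Γ : Set (Finset V)) (hΓ : IsComplex Γ)
    (hproper : ∀ g : G, ∀ F ∈ Γ, F.image (fun v => g • v) = F → ∀ v ∈ F, g • v = v) :
    ∀ F ∈ Γ, F.card ≤
      Fintype.card V -
        {W : Set V | (∃ v : V, W = MulAction.orbit G v) ∧ 2 ≤ W.ncard}.ncard := by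
  intro F hF
  have hbig_not_subset :
      {W : Set V | (∃ v : V, W = MulAction.orbit G v) ∧ 2 ≤ W.ncard} ⊆
        {W : Set V | (∃ v : V, W = MulAction.orbit G v) ∧ ¬ W ⊆ ↑F} := by
    rintro _ ⟨⟨v, rfl⟩, htwo⟩
    refine ⟨⟨v, rfl⟩, fun hsub => ?_⟩
    rw [orbit_eq_singleton_of_subset_face hΓ hproper hF hsub, Set.ncard_singleton] at htwo
    omega
  have hcount := (Set.ncard_le_ncard hbig_not_subset (Set.toFinite _)).trans
    (ncard_orbits_not_subset_le (G := G) F)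
  have hF_le : F.card ≤ Fintype.card V := Finset.card_le_univ F
  omega

/-- If a group `G` acts properly on a simplicial complex `Γ` on `n`
vertices and `m` is the number of `G`-orbits of size greater than 1, then every face of
`Γ` has at most `n - m` vertices. -/
theorem proper_action_dimension_bound {V : Type*} [Fintype V] [DecidableEq V]
    {G : Type*} [Group G] [MulAction G V]
    (Γ : Set (Finset V)) (hΓ : IsComplex Γ)
    (hmap : ∀ g : G, ∀ F ∈ Γ, F.image (fun v => g • v) ∈ Γ)
    (hproper : ∀ g : G, ∀ F ∈ Γ, F.image (fun v => g • v) = F → ∀ v ∈ F, g • v = v) :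
    ∀ F ∈ Γ, F.card ≤
      Fintype.card V -
        {W : Set V | (∃ v : V, W = MulAction.orbit G v) ∧ 2 ≤ W.ncard}.ncard :=
  proper_action_dimension_bound_general Γ hΓ hproper
end

section
/- Let Λ = Λ(l; p_1, …, p_m) with vertex set V totally ordered by O: y_1 < … < y_n, let 1 ≤ d ≤ n − m, and let L = (τ_1, τ_2, …, τ_r) be the listing of the facets of skel_d(Λ) in reverse lexicographic order with respect to O. Then for every i, τ̄_i − (∪_{j<i} τ̄_j) = { γ ⊆ τ_i : R_O(τ_i) ⊆ γ }. In particular, L is a shelling of skel_d(Λ) and |T_L(τ_i)| = |R_O(τ_i)| for every i. -/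
open Finset

/-!
A vertex `x ∈ R_O(τ)` can be exchanged for a smaller vertex outside `τ` (for `s_O(τ)` when
`x > s_O(τ)`, for `miss(τ, i)` when `x ∈ U_O(τ)`) without completing a block, which yields an
earlier facet containing every face of `τ` that avoids `x`. Conversely, suppose an earlier facet
`τ'` contains `R_O(τ)`, and let `v` be the largest vertex of `τ \ τ'`. Then `v ≤ s_O(τ)`, so each
`u ∈ τ' \ τ` lies below `s_O(τ)` and is therefore `miss(τ, i)` for some `i`; as `τ'` is a face it
omits some `z ∈ P_i`, and `z ∈ τ \ τ'` with `z < u < v` because `U_O(τ) ⊆ τ'`. The assignment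
`u ↦ z` is injective, so `|τ' \ τ| < |τ \ τ'|`, contradicting `|τ| = |τ'|`. Once the new faces
of `τ` form the interval `[R_O(τ), τ]`, the shelling property and `|T_L(τ)| = |R_O(τ)|` are
formal consequences.
-/

theorem card_insert_erase_of_notMem {α : Type*} [DecidableEq α] {s : Finset α} {x y : α}
    (hx : x ∈ s) (hy : y ∉ s) : (insert y (s.erase x)).card = s.card := by
  rw [card_insert_of_notMem fun h => hy (mem_of_mem_erase h), card_erase_add_one hx]

section Restriction

variable {V : Type*} [DecidableEq V] {L : List (Finset V)} {τ τ' R γ : Finset V}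

theorem mem_prevFacets_iff {r : Finset V → Finset V → Prop} (hr : ∀ a b, r a b → ¬ r b a)
    (hL : L.Pairwise r) (hτ : τ ∈ L) : τ' ∈ prevFacets L τ ↔ τ' ∈ L ∧ r τ' τ := by
  induction L with
  | nil => simp at hτ
  | cons a L ih =>
    obtain ⟨ha, hL⟩ := List.pairwise_cons.1 hL
    by_cases haτ : a = τ
    · subst haτ
      simp only [prevFacets, List.takeWhile_cons, bne_self_eq_false, Bool.false_eq_true,
        if_false, List.not_mem_nil, false_iff, not_and]
      intro hmem hr'
      rcases List.mem_cons.1 hmem with rfl | hτ'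
      exacts [hr _ _ hr' hr', hr _ _ (ha τ' hτ') hr']
    · have hτL : τ ∈ L := (List.mem_cons.1 hτ).resolve_left (Ne.symm haτ)
      simp only [prevFacets, List.takeWhile_cons, bne_iff_ne, ne_eq, haτ, not_false_eq_true,
        if_true, List.mem_cons] at ih ⊢
      rw [ih hL hτL]
      constructor
      · rintro (rfl | ⟨h, hr'⟩)
        exacts [⟨Or.inl rfl, ha τ hτL⟩, ⟨Or.inr h, hr'⟩]
      · rintro ⟨rfl | h, hr'⟩
        exacts [Or.inl rfl, Or.inr ⟨h, hr'⟩]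

def IsRestriction (L : List (Finset V)) (τ R : Finset V) : Prop :=
  ∀ γ ⊆ τ, ¬ coveredBefore L τ γ ↔ R ⊆ γ

namespace IsRestriction

variable (h : IsRestriction L τ R)
include h

theorem coveredBefore_iff (hγ : γ ⊆ τ) : coveredBefore L τ γ ↔ ¬ R ⊆ γ := by
  rw [← h γ hγ, not_not]

theorem coveredBefore_erase {x : V} (hx : x ∈ R) : coveredBefore L τ (τ.erase x) :=
  (h.coveredBefore_iff (erase_subset _ _)).2 fun hR => (mem_erase.1 (hR hx)).1 rfl

theorem exists_erase_of_coveredBefore (hγ : γ ⊆ τ) (hcov : coveredBefore L τ γ) :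
    ∃ x ∈ R, γ ⊆ τ.erase x := by
  obtain ⟨x, hxR, hxγ⟩ := not_subset.1 ((h.coveredBefore_iff hγ).1 hcov)
  exact ⟨x, hxR, subset_erase.2 ⟨hγ, hxγ⟩⟩

theorem isPureDim (hR : R ⊆ τ) (hprev : prevFacets L τ ≠ []) :
    IsPureDim {γ | γ ⊆ τ ∧ coveredBefore L τ γ} (τ.card - 1) := by
  have hcard {x : V} (hx : x ∈ R) : (τ.erase x).card = τ.card - 1 := card_erase_of_mem (hR hx)
  obtain ⟨τ₀, hτ₀⟩ := List.exists_mem_of_ne_nil _ hprev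
  have hempty : coveredBefore L τ ∅ := ⟨τ₀, hτ₀, empty_subset _⟩
  obtain ⟨x, hx⟩ := nonempty_iff_ne_empty.2 fun hR₀ =>
    (h.coveredBefore_iff (empty_subset _)).1 hempty (hR₀ ▸ subset_rfl)
  refine ⟨⟨τ.erase x, ⟨erase_subset _ _, h.coveredBefore_erase hx⟩, hcard hx⟩, ?_⟩
  rintro γ ⟨hγ, hcov⟩
  obtain ⟨y, hy, hγy⟩ := h.exists_erase_of_coveredBefore hγ hcov
  exact ⟨τ.erase y, ⟨erase_subset _ _, h.coveredBefore_erase hy⟩, hγy, hcard hy⟩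

theorem TL_eq (hR : R ⊆ τ) : TL L τ = ↑(R.image τ.erase) := by
  ext γ
  simp only [TL, Set.mem_ofPred_eq, coe_image, Set.mem_image, mem_coe]
  constructor
  · rintro ⟨hγ, hcov, hmax⟩
    obtain ⟨x, hx, hγx⟩ := h.exists_erase_of_coveredBefore hγ hcov
    exact ⟨x, hx, hmax _ hγx (erase_subset _ _) (h.coveredBefore_erase hx)⟩
  · rintro ⟨x, hx, rfl⟩
    refine ⟨erase_subset _ _, h.coveredBefore_erase hx, fun γ' hγ' hγ'τ hcov => ?_⟩
    have hxγ' : x ∉ γ' := fun hxγ' => by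
      have hγ'_eq : γ' = τ :=
        hγ'τ.antisymm (insert_erase (hR hx) ▸ insert_subset hxγ' hγ')
      exact (h τ subset_rfl).2 hR (hγ'_eq ▸ hcov)
    exact (subset_erase.2 ⟨hγ'τ, hxγ'⟩).antisymm hγ'

theorem ncard_TL (hR : R ⊆ τ) : (TL L τ).ncard = R.card := by
  rw [h.TL_eq hR, Set.ncard_coe_finset, card_image_of_injOn ((erase_injOn τ).mono hR)]

end IsRestriction

end Restriction

section Blocks

variable {l m : ℕ} {p : Fin m → ℕ} {τ σ : Finset (LamVert l p)} {i j : Fin m}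
  {s v w x : LamVert l p}

theorem mem_Pblock : v ∈ Pblock l p i ↔ ∃ a : Fin (p i), Sum.inr ⟨i, a⟩ = v := by
  simp [Pblock]

theorem card_Pblock (i : Fin m) : (Pblock l p i).card = p i := by
  rw [Pblock, card_image_of_injective _ fun a b hab => by simpa using hab, card_univ,
    Fintype.card_fin]

theorem eq_of_mem_Pblock (hi : v ∈ Pblock l p i) (hj : v ∈ Pblock l p j) : i = j := by
  obtain ⟨a, rfl⟩ := mem_Pblock.1 hi
  obtain ⟨b, hb⟩ := mem_Pblock.1 hj
  exact (Sigma.mk.inj (Sum.inr_injective hb)).1.symm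

theorem card_missSet (hpi : 0 < p i) (hi : i ∈ fullSet τ) : (missSet τ i).card = 1 := by
  have hfull : (Pblock l p i ∩ τ).card = p i - 1 := (mem_filter.1 hi).2
  have := card_inter_add_card_sdiff (Pblock l p i) τ
  rw [card_Pblock, hfull] at this
  rw [missSet]
  omega

theorem eq_of_mem_missSet (hpi : 0 < p i) (hi : i ∈ fullSet τ) (hv : v ∈ missSet τ i)
    (hw : w ∈ missSet τ i) : v = w :=
  card_le_one.1 (card_missSet hpi hi).le _ hv _ hw

theorem mem_of_mem_Pblock_of_ne (hpi : 0 < p i) (hi : i ∈ fullSet τ) (hw : w ∈ missSet τ i)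
    (hv : v ∈ Pblock l p i) (hvw : v ≠ w) : v ∈ τ :=
  by_contra fun hvτ => hvw (eq_of_mem_missSet hpi hi (mem_sdiff.2 ⟨hv, hvτ⟩) hw)

theorem mem_LambdaFaces_of_subset (hσ : σ ∈ LambdaFaces l p) (h : τ ⊆ σ) :
    τ ∈ LambdaFaces l p :=
  fun i hi => hσ i (hi.trans h)

theorem mem_missSet_of_Pblock_subset_insert (hτ : τ ∈ LambdaFaces l p) (hs : s ∉ τ)
    (h : Pblock l p i ⊆ insert s τ) : i ∈ fullSet τ ∧ s ∈ missSet τ i := by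
  have hsP : s ∈ Pblock l p i :=
    by_contra fun hsP => hτ i ((subset_insert_iff_of_notMem hsP).1 h)
  have hmiss : missSet τ i = {s} := by
    refine eq_singleton_iff_unique_mem.2 ⟨mem_sdiff.2 ⟨hsP, hs⟩, fun v hv => ?_⟩
    obtain ⟨hvP, hvτ⟩ := mem_sdiff.1 hv
    exact (mem_insert.1 (h hvP)).resolve_right hvτ
  have := card_inter_add_card_sdiff (Pblock l p i) τ
  rw [card_Pblock, ← missSet, hmiss, card_singleton] at this
  exact ⟨mem_filter.2 ⟨mem_univ _, by omega⟩, hmiss ▸ mem_singleton_self s⟩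

theorem insert_mem_LambdaFaces (hτ : τ ∈ LambdaFaces l p) (hs : s ∈ sCand τ) :
    insert s τ ∈ LambdaFaces l p := by
  obtain ⟨-, hsτ, hsmiss⟩ := mem_filter.1 hs
  intro i hi
  obtain ⟨hfull, hmiss⟩ := mem_missSet_of_Pblock_subset_insert hτ hsτ hi
  exact hsmiss i hfull hmiss

theorem insert_erase_mem_LambdaFaces (hτ : τ ∈ LambdaFaces l p) (hw : w ∈ missSet τ i)
    (hx : x ∈ Pblock l p i) (hxw : x ≠ w) : insert w (τ.erase x) ∈ LambdaFaces l p := by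
  intro j hj
  have hwτ : w ∉ τ := (mem_sdiff.1 hw).2
  obtain ⟨-, hwj⟩ := mem_missSet_of_Pblock_subset_insert hτ hwτ
    (hj.trans (insert_subset_insert _ (erase_subset _ _)))
  obtain rfl := eq_of_mem_Pblock (mem_sdiff.1 hw).1 (mem_sdiff.1 hwj).1
  rcases mem_insert.1 (hj hx) with h | h
  exacts [hxw h, (mem_erase.1 h).1 rfl]

end Blocks

section Skeleton

variable {l m n d : ℕ} {p : Fin m → ℕ} {τ : Finset (LamVert l p)}

theorem sCand_nonempty (hp : ∀ i, 0 < p i) (hn : n = l + ∑ i, p i) (hd : d ≤ n - m)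
    (hτ : τ.card < d) : (sCand τ).Nonempty := by
  rw [nonempty_iff_ne_empty]
  intro hempty
  have hcover : (univ : Finset (LamVert l p)) ⊆ τ ∪ (fullSet τ).biUnion (missSet τ) := by
    intro v _
    by_contra hv
    simp only [mem_union, mem_biUnion, not_or, not_exists, not_and] at hv
    have hvC : v ∈ sCand τ := mem_filter.2 ⟨mem_univ _, hv.1, hv.2⟩
    simp [hempty] at hvC
  have hmiss : ((fullSet τ).biUnion (missSet τ)).card ≤ m :=
    calc _ ≤ ∑ i ∈ fullSet τ, (missSet τ i).card := card_biUnion_le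
      _ = (fullSet τ).card := by
        rw [card_eq_sum_ones]; exact sum_congr rfl fun i hi => card_missSet (hp i) hi
      _ ≤ m := card_le_univ _ |>.trans_eq (Fintype.card_fin m)
  have hcard := (card_le_card hcover).trans (card_union_le _ _)
  rw [card_univ, show Fintype.card (LamVert l p) = n by simp [hn]] at hcard
  omega

theorem exists_skelFacets_superset (hp : ∀ i, 0 < p i) (hn : n = l + ∑ i, p i)
    (hd : d ≤ n - m) (hτ : τ ∈ skel l p d) : ∃ σ ∈ skelFacets l p d, τ ⊆ σ := by
  obtain ⟨hτ, hcard⟩ := hτ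
  induction hk : d - τ.card generalizing τ with
  | zero => exact ⟨τ, ⟨hτ, by omega⟩, subset_rfl⟩
  | succ k ih =>
    obtain ⟨s, hs⟩ := sCand_nonempty hp hn hd (by omega : τ.card < d)
    have hsτ : s ∉ τ := (mem_filter.1 hs).2.1
    obtain ⟨σ, hσ, hsub⟩ := ih (insert_mem_LambdaFaces hτ hs)
      (by rw [card_insert_of_notMem hsτ]; omega) (by rw [card_insert_of_notMem hsτ]; omega)
    exact ⟨σ, hσ, (subset_insert _ _).trans hsub⟩

end Skeleton

section RevLex

variable {l m n d : ℕ} {p : Fin m → ℕ} {e : LamVert l p ≃ Fin n}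
  {τ τ' γ : Finset (LamVert l p)} {i : Fin m} {s u v x : LamVert l p}

theorem rlexLt_asymm (h : rlexLt e τ τ') : ¬ rlexLt e τ' τ := by
  obtain ⟨v, hv, hvτ, hv'⟩ := h
  rintro ⟨u, hu, huτ', hu'⟩
  rcases lt_trichotomy (e v) (e u) with h | h | h
  · exact huτ' ((hv' u h).1 hu)
  · exact huτ' (e.injective h ▸ hv)
  · exact hvτ ((hu' v h).1 hv)

theorem rlexLt_insert_erase (hx : x ∈ τ) (hlt : e s < e x) :
    rlexLt e (insert s (τ.erase x)) τ := by
  refine ⟨x, hx, fun hx' => ?_, fun w hw => ?_⟩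
  · rcases mem_insert.1 hx' with h | h
    exacts [hlt.ne (congrArg e h.symm), (mem_erase.1 h).1 rfl]
  · have hws : w ≠ s := fun h => (hlt.trans hw).ne (congrArg e h.symm)
    have hwx : w ≠ x := fun h => hw.ne (congrArg e h.symm)
    simp [hws, hwx]

theorem exists_sCand_lt_of_mem_tauAbove (hx : x ∈ tauAbove e τ) :
    ∃ s ∈ sCand τ, e s < e x := by
  have hlt := (mem_filter.1 hx).2
  obtain ⟨a, ha⟩ := WithTop.ne_top_iff_exists.1 (ne_top_of_lt hlt)
  obtain ⟨s, hs, rfl⟩ := mem_image.1 (mem_of_min ha.symm)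
  exact ⟨s, hs, WithTop.coe_lt_coe.1 (ha ▸ hlt)⟩

theorem exists_mem_missSet_of_lt (hv : v ∈ τ) (hvR : v ∉ tauAbove e τ) (hu : u ∉ τ)
    (huv : e u < e v) : ∃ i ∈ fullSet τ, u ∈ missSet τ i := by
  by_contra! h
  have huC : u ∈ sCand τ := mem_filter.2 ⟨mem_univ _, hu, h⟩
  exact hvR (mem_filter.2 ⟨hv, (min_le (mem_image_of_mem e huC)).trans_lt
    (WithTop.coe_lt_coe.2 huv)⟩)

theorem RSet_subset (hp : ∀ i, 0 < p i) : RSet e τ ⊆ τ := by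
  refine union_subset (filter_subset _ _) fun y hy => ?_
  obtain ⟨i, hi, hyP, w, hw, hwy⟩ := (mem_filter.1 hy).2
  exact mem_of_mem_Pblock_of_ne (hp i) hi hw hyP fun h => hwy.ne (congrArg e h.symm)

theorem exists_swap_of_mem_RSet (hτ : τ ∈ LambdaFaces l p)
    (hx : x ∈ RSet e τ) : ∃ s ∉ τ, e s < e x ∧ insert s (τ.erase x) ∈ LambdaFaces l p := by
  rcases mem_union.1 hx with hx | hx
  · obtain ⟨s, hs, hsx⟩ := exists_sCand_lt_of_mem_tauAbove hx
    exact ⟨s, (mem_filter.1 hs).2.1, hsx, mem_LambdaFaces_of_subset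
      (insert_mem_LambdaFaces hτ hs) (insert_subset_insert _ (erase_subset _ _))⟩
  · obtain ⟨i, -, hxP, w, hw, hwx⟩ := (mem_filter.1 hx).2
    exact ⟨w, (mem_sdiff.1 hw).2, hwx,
      insert_erase_mem_LambdaFaces hτ hw hxP fun h => hwx.ne (congrArg e h.symm)⟩

theorem exists_rlexLt_superset (hp : ∀ i, 0 < p i) (hτ : τ ∈ skelFacets l p d)
    (hγ : γ ⊆ τ) (hx : x ∈ RSet e τ) (hxγ : x ∉ γ) :
    ∃ τ' ∈ skelFacets l p d, rlexLt e τ' τ ∧ γ ⊆ τ' := by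
  have hxτ := RSet_subset hp hx
  obtain ⟨s, hs, hsx, hface⟩ := exists_swap_of_mem_RSet hτ.1 hx
  exact ⟨insert s (τ.erase x), ⟨hface, (card_insert_erase_of_notMem hxτ hs).trans hτ.2⟩,
    rlexLt_insert_erase hxτ hsx, (subset_erase.2 ⟨hγ, hxγ⟩).trans (subset_insert _ _)⟩

theorem exists_mem_sdiff_lt_of_mem_missSet (hp : ∀ i, 0 < p i)
    (hτ' : τ' ∈ LambdaFaces l p) (hU : USet e τ ⊆ τ') (hi : i ∈ fullSet τ)
    (hu : u ∈ missSet τ i) (huτ' : u ∈ τ') :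
    ∃ z ∈ τ \ τ', z ∈ Pblock l p i ∧ e z < e u := by
  obtain ⟨z, hzP, hzτ'⟩ := not_subset.1 (hτ' i)
  have hzu : z ≠ u := fun h => hzτ' (h ▸ huτ')
  refine ⟨z, mem_sdiff.2 ⟨mem_of_mem_Pblock_of_ne (hp i) hi hu hzP hzu, hzτ'⟩, hzP, ?_⟩
  refine (lt_or_gt_of_ne fun h => hzu (e.injective h)).resolve_right fun huz => hzτ' (hU ?_)
  exact mem_filter.2 ⟨mem_univ _, i, hi, hzP, u, hu, huz⟩

theorem not_rlexLt_of_RSet_subset (hp : ∀ i, 0 < p i) (hτ : τ ∈ skelFacets l p d)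
    (hτ' : τ' ∈ skelFacets l p d) (hR : RSet e τ ⊆ τ') : ¬ rlexLt e τ' τ := by
  rintro ⟨v, hvτ, hvτ', hagree⟩
  have hvR : v ∉ tauAbove e τ := fun h => hvτ' (hR (mem_union_left _ h))
  have hU : USet e τ ⊆ τ' := subset_union_right.trans hR
  -- `u ↦ z` is injective: `z` determines the block `P_i`, hence `u = miss(τ, i)`
  have hle : (τ' \ τ).card ≤ ((τ \ τ').erase v).card := by
    refine card_le_card_of_forall_subsingleton
      (fun u z => ∃ i ∈ fullSet τ, u ∈ missSet τ i ∧ z ∈ Pblock l p i) (fun u hu => ?_) ?_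
    · obtain ⟨huτ', huτ⟩ := mem_sdiff.1 hu
      have huv : e u < e v := lt_of_le_of_ne (not_lt.1 fun h => huτ ((hagree u h).1 huτ'))
        fun h => hvτ' (e.injective h ▸ huτ')
      obtain ⟨i, hi, hui⟩ := exists_mem_missSet_of_lt hvτ hvR huτ huv
      obtain ⟨z, hz, hzP, hzu⟩ := exists_mem_sdiff_lt_of_mem_missSet hp hτ'.1 hU hi hui huτ'
      exact ⟨z, mem_erase.2 ⟨fun h => (hzu.trans huv).ne (congrArg e h), hz⟩, i, hi, hui, hzP⟩
    · rintro z - u₁ ⟨-, i₁, hi₁, hu₁, hz₁⟩ u₂ ⟨-, i₂, -, hu₂, hz₂⟩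
      obtain rfl := eq_of_mem_Pblock hz₁ hz₂
      exact eq_of_mem_missSet (hp i₁) hi₁ hu₁ hu₂
  have hcard : (τ \ τ').card = (τ' \ τ).card := card_sdiff_comm (hτ.2.trans hτ'.2.symm)
  have hpos : 0 < (τ \ τ').card := card_pos.2 ⟨v, mem_sdiff.2 ⟨hvτ, hvτ'⟩⟩
  rw [card_erase_of_mem (mem_sdiff.2 ⟨hvτ, hvτ'⟩)] at hle
  omega

theorem isRestriction_RSet (hp : ∀ i, 0 < p i) {L : List (Finset (LamVert l p))}
    (hL : ∀ τ, τ ∈ L ↔ τ ∈ skelFacets l p d) (hsorted : L.Pairwise (rlexLt e))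
    (hτ : τ ∈ L) : IsRestriction L τ (RSet e τ) := by
  have hprev (τ') := mem_prevFacets_iff (τ' := τ') (fun _ _ => rlexLt_asymm) hsorted hτ
  intro γ hγ
  constructor
  · intro hnc
    by_contra hns
    obtain ⟨x, hxR, hxγ⟩ := not_subset.1 hns
    obtain ⟨τ', hτ', hlt, hγτ'⟩ := exists_rlexLt_superset hp ((hL τ).1 hτ) hγ hxR hxγ
    exact hnc ⟨τ', (hprev τ').2 ⟨(hL τ').2 hτ', hlt⟩, hγτ'⟩
  · rintro hR ⟨τ', hτ'p, hγτ'⟩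
    obtain ⟨hτ'L, hlt⟩ := (hprev τ').1 hτ'p
    exact not_rlexLt_of_RSet_subset hp ((hL τ).1 hτ) ((hL τ').1 hτ'L) (hR.trans hγτ') hlt

end RevLex

theorem revlex_shelling_general {l m n d : ℕ} (p : Fin m → ℕ)
    (hp : ∀ i, 2 ≤ p i) (hn : n = l + ∑ i, p i)
    (hd2 : d ≤ n - m)
    (e : LamVert l p ≃ Fin n)
    (L : List (Finset (LamVert l p)))
    (hmem : ∀ τ, τ ∈ L ↔ τ ∈ skelFacets l p d)
    (hsorted : L.Pairwise (rlexLt e)) :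
    (∀ τ ∈ L, ∀ γ, γ ⊆ τ → (¬ coveredBefore L τ γ ↔ RSet e τ ⊆ γ)) ∧
    IsShelling (skel l p d) d L ∧
    ∀ τ ∈ L, (TL L τ).ncard = (RSet e τ).card := by
  have hp' (i : Fin m) : 0 < p i := zero_lt_two.trans_le (hp i)
  have hres (τ) (hτ : τ ∈ L) : IsRestriction L τ (RSet e τ) :=
    isRestriction_RSet hp' hmem hsorted hτ
  refine ⟨hres, ⟨?_, fun τ => ?_, fun σ hσ => ?_, fun τ hτ hprev => ?_⟩,
    fun τ hτ => (hres τ hτ).ncard_TL (RSet_subset hp')⟩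
  · exact hsorted.imp fun {τ τ'} h (heq : τ = τ') => rlexLt_asymm h (heq ▸ h)
  · rw [hmem]
    exact ⟨fun h => ⟨⟨h.1, h.2.le⟩, h.2⟩, fun h => ⟨h.1.1, h.2⟩⟩
  · obtain ⟨τ, hτ, hστ⟩ := exists_skelFacets_superset hp' hn hd2 hσ
    exact ⟨τ, (hmem τ).2 hτ, hστ⟩
  · simpa only [((hmem τ).1 hτ).2] using (hres τ hτ).isPureDim (RSet_subset hp') hprev

/-- Listing the facets of `skel_d(Λ)` in reverse lexicographic order with
respect to the vertex ordering `e` yields, for every facet `τ`,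
`τ̄ − (∪_{earlier} τ̄') = {γ ⊆ τ : R_O(τ) ⊆ γ}`; in particular this listing is a shelling
of `skel_d(Λ)` and `|T_L(τ)| = |R_O(τ)|` for every facet `τ`. -/
theorem revlex_shelling {l m n d : ℕ} (p : Fin m → ℕ)
    (hp : ∀ i, 2 ≤ p i) (hn : n = l + ∑ i, p i)
    (hd1 : 1 ≤ d) (hd2 : d ≤ n - m)
    (e : LamVert l p ≃ Fin n)
    (L : List (Finset (LamVert l p)))
    (hmem : ∀ τ, τ ∈ L ↔ τ ∈ skelFacets l p d)
    (hsorted : L.Pairwise (rlexLt e)) :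
    (∀ τ ∈ L, ∀ γ, γ ⊆ τ → (¬ coveredBefore L τ γ ↔ RSet e τ ⊆ γ)) ∧
    IsShelling (skel l p d) d L ∧
    ∀ τ ∈ L, (TL L τ).ncard = (RSet e τ).card :=
  revlex_shelling_general p hp hn hd2 e L hmem hsorted
end
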